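/- Let K be a field of characteristic 0 and f ∈ K[x] an irreducible polynomial of prime degree p. If the splitting field K_f of f satisfies [K_f : K] > p, then the root cluster size of f is 1, i.e., for every root α of f, α is the only root of f lying in K(α). -/

import Mathlib

/-!
Perlis: sending a root `y` of `f` to the field `K⟮y⟯` partitions the roots into classes, and the
class of `γ` is exactly the set of roots lying in `K⟮γ⟯` (equal degrees force `K⟮y⟯ = K⟮γ⟯`).
Any two of these clusters correspond under `K⟮α⟯ ≃ₐ[K] K⟮β⟯`, so the cluster size divides the
number of distinct roots, which divides the prime `p`. A cluster of size `p` would put every root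
into `K⟮α⟯`, so the splitting field would have degree at most `[K⟮α⟯ : K] = p`.
-/

open Polynomial IntermediateField

theorem Set.dvd_ncard_of_forall_ncard_fiber_eq {ι M : Type*} {s : Set ι} (hs : s.Finite)
    (g : ι → M) {r : ℕ} (h : ∀ x ∈ s, {y ∈ s | g y = g x}.ncard = r) :
    r ∣ s.ncard := by
  classical
  lift s to Finset ι using hs
  rw [Set.ncard_coe_finset, Finset.card_eq_sum_card_image g s]
  refine Finset.dvd_sum fun m hm => ?_
  obtain ⟨x, hx, rfl⟩ := Finset.mem_image.1 hm
  rw [← h x hx, ← Set.ncard_coe_finset, Finset.coe_filter]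
  rfl

section RootCluster

variable {K L : Type*} [Field K] [Field L] [Algebra K L]

theorem Polynomial.image_rootSet_eq_rootSet_inter_range {E : Type*} [Field E] [Algebra K E]
    (f : K[X]) (φ : E →ₐ[K] L) : φ '' f.rootSet E = f.rootSet L ∩ Set.range φ := by
  ext x
  constructor
  · rintro ⟨y, hy, rfl⟩
    exact ⟨rootSet_mapsTo φ hy, y, rfl⟩
  · rintro ⟨hx, y, rfl⟩
    rw [mem_rootSet, aeval_algHom_apply, map_eq_zero_iff φ φ.injective, ← mem_rootSet] at hx
    exact ⟨y, hx, rfl⟩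

theorem Polynomial.ncard_rootSet_eq_of_algEquiv {E F : Type*} [Field E] [Field F] [Algebra K E]
    [Algebra K F] (f : K[X]) (σ : E ≃ₐ[K] F) : (f.rootSet E).ncard = (f.rootSet F).ncard :=
  le_antisymm
    (Set.ncard_le_ncard_of_injOn σ (fun _ hx => rootSet_mapsTo σ.toAlgHom hx) σ.injective.injOn
      (rootSet_finite f F))
    (Set.ncard_le_ncard_of_injOn σ.symm (fun _ hx => rootSet_mapsTo σ.symm.toAlgHom hx)
      σ.symm.injective.injOn (rootSet_finite f E))

theorem Polynomial.ncard_rootSet_eq_natSepDegree [IsAlgClosed L] (f : K[X]) :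
    (f.rootSet L).ncard = f.natSepDegree := by
  classical
  rw [rootSet_def, Set.ncard_coe_finset, natSepDegree_eq_of_isAlgClosed L]

variable {f : K[X]}

theorem IntermediateField.finrank_adjoin_simple_eq_natDegree (hf : Irreducible f) {α : L}
    (hα : aeval α f = 0) : Module.finrank K K⟮α⟯ = f.natDegree := by
  rw [adjoin.finrank (IsAlgebraic.isIntegral ⟨f, hf.ne_zero, hα⟩),
    ← minpoly.eq_of_irreducible hf hα,
    natDegree_mul_C (inv_ne_zero (leadingCoeff_ne_zero.2 hf.ne_zero))]

theorem IntermediateField.adjoin_simple_eq_of_mem_of_irreducible (hf : Irreducible f)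
    {α β : L} (hα : aeval α f = 0) (hβ : aeval β f = 0) (hβα : β ∈ K⟮α⟯) :
    K⟮β⟯ = K⟮α⟯ :=
  have := adjoin.finiteDimensional (IsAlgebraic.isIntegral ⟨f, hf.ne_zero, hα⟩)
  eq_of_le_of_finrank_eq (adjoin_simple_le_iff.2 hβα) <| by
    rw [finrank_adjoin_simple_eq_natDegree hf hα, finrank_adjoin_simple_eq_natDegree hf hβ]

variable (f) in
def rootCluster (α : L) : Set L := f.rootSet L ∩ K⟮α⟯

theorem rootCluster_eq_image_rootSet (α : L) :
    rootCluster f α = K⟮α⟯.val '' f.rootSet K⟮α⟯ := by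
  rw [image_rootSet_eq_rootSet_inter_range, rootCluster, ← AlgHom.coe_range, range_val]
  rfl

theorem ncard_rootCluster_eq (hf : Irreducible f) {α β : L} (hα : aeval α f = 0)
    (hβ : aeval β f = 0) : (rootCluster f α).ncard = (rootCluster f β).ncard := by
  have hmin : minpoly K α = minpoly K β := by
    rw [← minpoly.eq_of_irreducible hf hα, ← minpoly.eq_of_irreducible hf hβ]
  rw [rootCluster_eq_image_rootSet, rootCluster_eq_image_rootSet, coe_val, coe_val,
    Set.ncard_image_of_injective _ Subtype.val_injective,
    Set.ncard_image_of_injective _ Subtype.val_injective,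
    ncard_rootSet_eq_of_algEquiv f (minpoly.algEquiv ⟨f, hf.ne_zero, hα⟩ hmin)]

theorem rootCluster_eq_fiber (hf : Irreducible f) {γ : L} (hγ : aeval γ f = 0) :
    {y ∈ f.rootSet L | K⟮y⟯ = K⟮γ⟯} = rootCluster f γ := by
  ext y
  refine and_congr_right fun hy => ⟨fun h => h ▸ mem_adjoin_simple_self K y, fun h => ?_⟩
  exact adjoin_simple_eq_of_mem_of_irreducible hf hγ (aeval_eq_zero_of_mem_rootSet hy) h

theorem ncard_rootCluster_dvd_ncard_rootSet (hf : Irreducible f) {α : L}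
    (hα : aeval α f = 0) : (rootCluster f α).ncard ∣ (f.rootSet L).ncard := by
  refine Set.dvd_ncard_of_forall_ncard_fiber_eq (rootSet_finite f L) (fun y => K⟮y⟯)
    fun γ hγ => ?_
  rw [rootCluster_eq_fiber hf (aeval_eq_zero_of_mem_rootSet hγ)]
  exact ncard_rootCluster_eq hf (aeval_eq_zero_of_mem_rootSet hγ) hα

theorem rootCluster_eq_singleton_or_eq_rootSet [IsAlgClosed L] (hf : Irreducible f)
    (hp : f.natDegree.Prime) {α : L} (hα : aeval α f = 0) :
    rootCluster f α = {α} ∨ rootCluster f α = f.rootSet L := by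
  have hα_mem : α ∈ rootCluster f α :=
    ⟨mem_rootSet.2 ⟨hf.ne_zero, hα⟩, mem_adjoin_simple_self K α⟩
  have hdvd : (rootCluster f α).ncard ∣ f.natDegree :=
    (ncard_rootCluster_dvd_ncard_rootSet hf hα).trans
      (ncard_rootSet_eq_natSepDegree (L := L) f ▸ hf.natSepDegree_dvd_natDegree)
  refine (hp.eq_one_or_self_of_dvd _ hdvd).imp (fun h => ?_) (fun h => ?_)
  · obtain ⟨a, ha⟩ := Set.ncard_eq_one.1 h
    rw [ha] at hα_mem ⊢
    rw [Set.mem_singleton_iff.1 hα_mem]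
  · exact Set.eq_of_subset_of_ncard_le (fun _ hx => hx.1) (h ▸ ncard_rootSet_le f L)
      (rootSet_finite f L)

end RootCluster

theorem cluster_size_one_of_prime_degree_general {K : Type*} [Field K]
    (f : K[X]) (hf : Irreducible f) (p : ℕ) (hp : p.Prime) (hdeg : f.natDegree = p)
    (Kf : IntermediateField K (AlgebraicClosure K))
    (hKf : Kf = IntermediateField.adjoin K (f.rootSet (AlgebraicClosure K)))
    (hbig : p < Module.finrank K Kf) :
    ∀ α : AlgebraicClosure K, aeval α f = 0 →
      {x : AlgebraicClosure K | aeval x f = 0 ∧ x ∈ K⟮α⟯} = {α} := by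
  intro α hα
  have hcluster : {x | aeval x f = 0 ∧ x ∈ K⟮α⟯} = rootCluster f α := by
    ext x
    simp [rootCluster, mem_rootSet, hf.ne_zero]
  rw [hcluster]
  refine (rootCluster_eq_singleton_or_eq_rootSet hf (hdeg ▸ hp) hα).resolve_right fun hall => ?_
  have hle : Kf ≤ K⟮α⟯ := by
    rw [hKf, adjoin_le_iff, ← hall]
    exact Set.inter_subset_right
  have := adjoin.finiteDimensional (IsAlgebraic.isIntegral ⟨f, hf.ne_zero, hα⟩)
  have hfinrank := finrank_le_of_le_right hle
  rw [finrank_adjoin_simple_eq_natDegree hf hα, hdeg] at hfinrank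
  omega

/-- For an irreducible polynomial `f` of prime degree `p` over a field `K` of characteristic
zero, if the splitting field `K_f` satisfies `[K_f : K] > p`, then the root cluster size of
`f` is `1`: every root `α` of `f` is the only root of `f` lying in `K(α)`. -/
theorem cluster_size_one_of_prime_degree {K : Type*} [Field K] [CharZero K]
    (f : K[X]) (hf : Irreducible f) (p : ℕ) (hp : p.Prime) (hdeg : f.natDegree = p)
    (Kf : IntermediateField K (AlgebraicClosure K))
    (hKf : Kf = IntermediateField.adjoin K (f.rootSet (AlgebraicClosure K)))
    (hbig : p < Module.finrank K Kf) :
    ∀ α : AlgebraicClosure K, aeval α f = 0 →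
      {x : AlgebraicClosure K | aeval x f = 0 ∧ x ∈ K⟮α⟯} = {α} :=
  cluster_size_one_of_prime_degree_general f hf p hp hdeg Kf hKf hbig
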